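/- Let d ≥ 3 be odd and a > 0, and define ∇̂f⁽¹⁾ : ℝ^d → ℝ^d by ∇̂f⁽¹⁾(x) = a∑_{j=1}^{(d−1)/2} ∇̂h_{2j−1}(x) − a·e_1. Then for every j ∈ {1,…,(d−1)/2} and every x ∈ K_{2j}, one has ∇̂f⁽¹⁾(x) ∈ K_{2j}. -/

import Mathlib

open scoped BigOperators RealInnerProductSpace Classical

noncomputable section

/-- The `k`-th standard basis vector of `ℝ^d`, `0`-indexed (so the paper's `e_k` is
`stdBasis d (k-1)`); out-of-range indices give `0`. -/
def stdBasis (d j : ℕ) : EuclideanSpace ℝ (Fin d) :=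
  if h : j < d then EuclideanSpace.single ⟨j, h⟩ 1 else 0

/-- The subgradient oracle `∇̂h_j` (paper's `1`-indexed `j`, so `e_{j+1} = stdBasis d j`
and `e_j = stdBasis d (j-1)`). -/
def gradh (d j : ℕ) (x : EuclideanSpace ℝ (Fin d)) : EuclideanSpace ℝ (Fin d) :=
  if ⟪stdBasis d (j - 1), x⟫ < ⟪stdBasis d j, x⟫ then stdBasis d j - stdBasis d (j - 1)
  else if ⟪stdBasis d j, x⟫ < ⟪stdBasis d (j - 1), x⟫ then stdBasis d (j - 1) - stdBasis d j
  else 0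

/-- `K_j = span{e_1, …, e_j}`. -/
def Ksub (d j : ℕ) : Submodule ℝ (EuclideanSpace ℝ (Fin d)) :=
  Submodule.span ℝ {v | ∃ i < j, v = stdBasis d i}


lemma inner_stdBasis_stdBasis_of_ne {d i k : ℕ} (h : i ≠ k) :
    ⟪stdBasis d k, stdBasis d i⟫ = 0 := by
  unfold stdBasis
  split_ifs with hk hi <;> simp [EuclideanSpace.inner_single_left, Fin.ext_iff, Ne.symm h]

lemma stdBasis_mem_Ksub {d i m : ℕ} (h : i < m) : stdBasis d i ∈ Ksub d m :=
  Submodule.subset_span ⟨i, h, rfl⟩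

lemma inner_stdBasis_eq_zero_of_mem_Ksub {d k m : ℕ} {x : EuclideanSpace ℝ (Fin d)}
    (hx : x ∈ Ksub d m) (hk : m ≤ k) : ⟪stdBasis d k, x⟫ = 0 := by
  have hle : Ksub d m ≤ LinearMap.ker (innerₛₗ ℝ (stdBasis d k)) := by
    refine Submodule.span_le.mpr ?_
    rintro _ ⟨i, hi, rfl⟩
    exact inner_stdBasis_stdBasis_of_ne (by omega)
  exact hle hx

lemma gradh_mem_Ksub_of_lt {d j m : ℕ} (hj : j < m) (x : EuclideanSpace ℝ (Fin d)) :
    gradh d j x ∈ Ksub d m := by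
  have hj₀ := stdBasis_mem_Ksub (d := d) (show j - 1 < m by omega)
  have hj₁ := stdBasis_mem_Ksub (d := d) hj
  unfold gradh
  split_ifs
  exacts [sub_mem hj₁ hj₀, sub_mem hj₀ hj₁, zero_mem _]

lemma gradh_eq_zero_of_mem_Ksub {d j m : ℕ} {x : EuclideanSpace ℝ (Fin d)}
    (hx : x ∈ Ksub d m) (hj : m < j) : gradh d j x = 0 := by
  simp [gradh, inner_stdBasis_eq_zero_of_mem_Ksub hx (show m ≤ j - 1 by omega),
    inner_stdBasis_eq_zero_of_mem_Ksub hx hj.le]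

/-- `∇̂h_m` is the only oracle mixing `e_m ∈ K_m` with `e_{m+1} ∉ K_m`. -/
lemma gradh_mem_Ksub_of_ne {d j m : ℕ} {x : EuclideanSpace ℝ (Fin d)}
    (hx : x ∈ Ksub d m) (hj : j ≠ m) : gradh d j x ∈ Ksub d m := by
  rcases hj.lt_or_gt with hlt | hgt
  · exact gradh_mem_Ksub_of_lt hlt x
  · rw [gradh_eq_zero_of_mem_Ksub hx hgt]
    exact zero_mem _

theorem stmt7_general (d : ℕ) (a : ℝ)
    (gf : EuclideanSpace ℝ (Fin d) → EuclideanSpace ℝ (Fin d))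
    (hgf : ∀ x, gf x =
      a • (∑ j ∈ Finset.Icc 1 ((d - 1) / 2), gradh d (2 * j - 1) x) - a • stdBasis d 0) :
    ∀ j ∈ Finset.Icc 1 ((d - 1) / 2), ∀ x ∈ Ksub d (2 * j), gf x ∈ Ksub d (2 * j) := by
  intro j hj x hx
  have hj₁ : 1 ≤ j := (Finset.mem_Icc.mp hj).1
  rw [hgf]
  refine sub_mem (Submodule.smul_mem _ _ (Submodule.sum_mem _ fun i _ => ?_))
    (Submodule.smul_mem _ _ (stdBasis_mem_Ksub (by omega)))
  exact gradh_mem_Ksub_of_ne hx (by omega)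

theorem stmt7 (d : ℕ) (hd : 3 ≤ d) (hodd : d % 2 = 1) (a : ℝ) (ha : 0 < a)
    (gf : EuclideanSpace ℝ (Fin d) → EuclideanSpace ℝ (Fin d))
    (hgf : ∀ x, gf x =
      a • (∑ j ∈ Finset.Icc 1 ((d - 1) / 2), gradh d (2 * j - 1) x) - a • stdBasis d 0) :
    ∀ j ∈ Finset.Icc 1 ((d - 1) / 2), ∀ x ∈ Ksub d (2 * j), gf x ∈ Ksub d (2 * j) :=
  stmt7_general d a gf hgf

end
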